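/- (Theorem 4, stability of the SBP-FD junction for the advection equation, nonconforming grids) Suppose there are positive integers m_u, m_v, diagonal positive-definite 'coarse' norm matrices P^c_{x,u} ∈ ℝ^{m_u×m_u}, P^c_{x,v} ∈ ℝ^{m_v×m_v}, coarse interpolation matrices J_w^u ∈ ℝ^{m_u×n_{x,w}}, J_w^v ∈ ℝ^{m_v×n_{x,w}}, J^{w,u} ∈ ℝ^{n_{x,w}×m_u}, J^{w,v} ∈ ℝ^{n_{x,w}×m_v} satisfying J^{w,u} = P_{x,w}^{-1}(J_w^u)^T P^c_{x,u} and J^{w,v} = P_{x,w}^{-1}(J_w^v)^T P^c_{x,v}, and grid-transfer matrices I^u_{c2f} ∈ ℝ^{n_{x,u}×m_u}, I^u_{f2c} ∈ ℝ^{m_u×n_{x,u}}, I^v_{c2f} ∈ ℝ^{n_{x,v}×m_v}, I^v_{f2c} ∈ ℝ^{m_v×n_{x,v}} satisfying P^c_{x,u} I^u_{f2c} = (I^u_{c2f})^T P_{x,u} and P^c_{x,v} I^v_{f2c} = (I^v_{c2f})^T P_{x,v}. Take as interpolation operators of the SBP-FD junction semi-discretization of the advection equation the nonconforming operators I_w^u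 = I^u_{c2f} J_w^u, I^{w,u} = J^{w,u} I^u_{f2c}, I_w^v = I^v_{c2f} J_w^v, I^{w,v} = J^{w,v} I^v_{f2c}, with I_w^w, I_u^u, I_v^v identity matrices and penalty parameters τ_w = -a_2/2, τ_{uv} = a_2/2. Then every triple of differentiable functions w, u, v satisfying the semi-discrete system for all t ≥ 0 obeys the energy conservation equality ‖w(t)‖²_{P_w} + ‖u(t)‖²_{P_u} + ‖v(t)‖²_{P_v} = ‖w(0)‖²_{P_w} + ‖u(0)‖²_{P_u} + ‖v(0)‖²_{P_v} for all t ≥ 0. -/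

import Mathlib

open Matrix
open scoped Kronecker

noncomputable section

/-- The first standard basis vector `e₀ = (1,0,…,0)ᵀ` of `ℝ^(l+1)`. -/
def e0v (l : ℕ) : Fin (l + 1) → ℝ := Pi.single 0 1

/-- The last standard basis vector `e_N = (0,…,0,1)ᵀ` of `ℝ^(l+1)`. -/
def eNv (l : ℕ) : Fin (l + 1) → ℝ := Pi.single (Fin.last l) 1

/-- The SBP energy `‖f‖²_P = fᵀ (Px ⊗ Py) f` of a real grid function. -/
def energyR {a b : Type*} [Fintype a] [Fintype b]
    (Px : Matrix a a ℝ) (Py : Matrix b b ℝ) (f : a × b → ℝ) : ℝ :=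
  dotProduct f ((Px ⊗ₖ Py).mulVec f)

/-!
Energy method. For symmetric `H = Px ⊗ Py` the energy rate of a block is `2 fᵀ H f'`. Since `Qx`
is skew and `Qy + Qyᵀ = ∓ e eᵀ` at the junction (upper sign for `w`, lower for `u`, `v`), the
volume terms leave `∓(a₂/2)` times the trace energy on the junction, which the penalty
`τ = ∓a₂/2` cancels. The remaining coupling terms, `−a₂ wᵀ (Pxw I^{w,u} ⊗ e₀e_Nᵀ) u` from `w` and
`+a₂ uᵀ (Pxu I_w^u ⊗ e_Ne₀ᵀ) w` from `u` (likewise for `v`), cancel because the nonconforming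
operators satisfy `Pxw I^{w,u} = (I_w^u)ᵀ Pxu`.
-/

section QuadraticForm

variable {n : Type*} [Fintype n]

theorem two_mul_dotProduct_mulVec_self_of_add_transpose {A S : Matrix n n ℝ}
    (hA : A + Aᵀ = S) (x : n → ℝ) : 2 * (x ⬝ᵥ A *ᵥ x) = x ⬝ᵥ S *ᵥ x := by
  rw [← hA, add_mulVec, dotProduct_add, dotProduct_transpose_mulVec]
  ring

theorem hasDerivAt_dotProduct_mulVec_self {M : Matrix n n ℝ} (hM : M.IsSymm)
    {f : ℝ → n → ℝ} {f' : n → ℝ} {t : ℝ} (hf : HasDerivAt f f' t) :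
    HasDerivAt (fun s => f s ⬝ᵥ M *ᵥ f s) (2 * (f t ⬝ᵥ M *ᵥ f')) t := by
  have hMf : HasDerivAt (fun s => M *ᵥ f s) (M *ᵥ f') t :=
    (M.mulVecLin.toContinuousLinearMap).hasFDerivAt.comp_hasDerivAt t hf
  have hsum : HasDerivAt (fun s => ∑ i, f s i * (M *ᵥ f s) i)
      (∑ i, (f' i * (M *ᵥ f t) i + f t i * (M *ᵥ f') i)) t :=
    HasDerivAt.fun_sum fun i _ => (hasDerivAt_pi.mp hf i).fun_mul (hasDerivAt_pi.mp hMf i)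
  refine hsum.congr_deriv ?_
  have hflip : f' ⬝ᵥ M *ᵥ f t = f t ⬝ᵥ M *ᵥ f' := by
    rw [← dotProduct_transpose_mulVec, hM.eq]
  rw [Finset.sum_add_distrib]
  change f' ⬝ᵥ M *ᵥ f t + f t ⬝ᵥ M *ᵥ f' = _
  rw [hflip, two_mul]

end QuadraticForm

theorem hasDerivAt_energyR {m n : Type*} [Fintype m] [Fintype n]
    {Px : Matrix m m ℝ} {Py : Matrix n n ℝ} (hPx : Px.IsSymm) (hPy : Py.IsSymm)
    {f : ℝ → m × n → ℝ} {f' : m × n → ℝ} {t : ℝ} (hf : HasDerivAt f f' t) :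
    HasDerivAt (fun s => energyR Px Py (f s)) (2 * (f t ⬝ᵥ (Px ⊗ₖ Py) *ᵥ f')) t :=
  hasDerivAt_dotProduct_mulVec_self (by rw [IsSymm, ← kroneckerMap_transpose, hPx.eq, hPy.eq]) hf

theorem dotProduct_kronecker_one_mulVec {m n l o : Type*} [Fintype m] [Fintype n] [Fintype l]
    [Fintype o] [DecidableEq n] {Px : Matrix m m ℝ}
    (K : Matrix m l ℝ) (E : Matrix n o ℝ) (f : m × n → ℝ) (g : l × o → ℝ) :
    f ⬝ᵥ (Px ⊗ₖ (1 : Matrix n n ℝ)) *ᵥ ((K ⊗ₖ E) *ᵥ g) = f ⬝ᵥ ((Px * K) ⊗ₖ E) *ᵥ g := by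
  rw [mulVec_mulVec, ← mul_kronecker_mul, Matrix.one_mul]

theorem Matrix.kronecker_neg {R l m n p : Type*} [Ring R] (A : Matrix l m R) (B : Matrix n p R) :
    A ⊗ₖ (-B) = -(A ⊗ₖ B) := by
  ext ⟨i, j⟩ ⟨i', j'⟩
  simp [kroneckerMap_apply]

section SBPBlock

variable {m n : Type*} [Fintype m] [Fintype n] [DecidableEq m] [DecidableEq n]
  {Px Qx : Matrix m m ℝ} {Py Qy : Matrix n n ℝ}

theorem two_mul_energy_rate_sbp {S : Matrix n n ℝ} (hPx : Px.IsSymm) (hPy : Py.IsSymm)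
    (hPx' : IsUnit Px.det) (hPy' : IsUnit Py.det) (hQx : Qx + Qxᵀ = 0) (hQy : Qy + Qyᵀ = S)
    (a1 a2 τ : ℝ) (f g : m × n → ℝ) :
    2 * (f ⬝ᵥ (Px ⊗ₖ Py) *ᵥ ((a1 • ((Px⁻¹ * Qx) ⊗ₖ (1 : Matrix n n ℝ))
        + a2 • ((1 : Matrix m m ℝ) ⊗ₖ (Py⁻¹ * Qy))) *ᵥ f - τ • ((1 : Matrix m m ℝ) ⊗ₖ Py⁻¹) *ᵥ g))
      = a2 * (f ⬝ᵥ (Px ⊗ₖ S) *ᵥ f) - 2 * τ * (f ⬝ᵥ (Px ⊗ₖ 1) *ᵥ g) := by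
  have hx : 2 * (f ⬝ᵥ (Qx ⊗ₖ Py) *ᵥ f) = 0 := by
    rw [two_mul_dotProduct_mulVec_self_of_add_transpose (S := 0), zero_mulVec, dotProduct_zero]
    rw [← kroneckerMap_transpose, hPy.eq, ← add_kronecker, hQx, zero_kronecker]
  have hy : 2 * (f ⬝ᵥ (Px ⊗ₖ Qy) *ᵥ f) = f ⬝ᵥ (Px ⊗ₖ S) *ᵥ f := by
    rw [two_mul_dotProduct_mulVec_self_of_add_transpose]
    rw [← kroneckerMap_transpose, hPx.eq, ← kronecker_add, hQy]
  simp only [mulVec_sub, mulVec_add, mulVec_smul, add_mulVec, smul_mulVec, mulVec_mulVec,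
    ← mul_kronecker_mul, mul_one, mul_nonsing_inv_cancel_left _ _ hPx',
    mul_nonsing_inv_cancel_left _ _ hPy', mul_nonsing_inv _ hPy', dotProduct_sub, dotProduct_add,
    dotProduct_smul, smul_eq_mul]
  linear_combination a1 * hx + a2 * hy

variable {l o : Type*} [Fintype l] [Fintype o]

theorem two_mul_energy_rate_sbp_top_interface (hPx : Px.IsSymm) (hPy : Py.IsSymm)
    (hPx' : IsUnit Px.det) (hPy' : IsUnit Py.det) (hQx : Qx + Qxᵀ = 0) {b : n → ℝ}
    (hQy : Qy + Qyᵀ = vecMulVec b b) (c : o → ℝ) (K : Matrix m l ℝ) (a1 a2 : ℝ)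
    (f : m × n → ℝ) (g : l × o → ℝ) :
    2 * (f ⬝ᵥ (Px ⊗ₖ Py) *ᵥ ((a1 • ((Px⁻¹ * Qx) ⊗ₖ (1 : Matrix n n ℝ))
        + a2 • ((1 : Matrix m m ℝ) ⊗ₖ (Py⁻¹ * Qy))) *ᵥ f
      - (a2 / 2) • ((1 : Matrix m m ℝ) ⊗ₖ Py⁻¹) *ᵥ
        (((1 : Matrix m m ℝ) ⊗ₖ vecMulVec b b) *ᵥ f - (K ⊗ₖ vecMulVec b c) *ᵥ g)))
      = a2 * (f ⬝ᵥ ((Px * K) ⊗ₖ vecMulVec b c) *ᵥ g) := by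
  rw [two_mul_energy_rate_sbp hPx hPy hPx' hPy' hQx hQy, mulVec_sub, dotProduct_sub,
    dotProduct_kronecker_one_mulVec, dotProduct_kronecker_one_mulVec, Matrix.mul_one]
  ring

theorem two_mul_energy_rate_sbp_bottom_interface (hPx : Px.IsSymm) (hPy : Py.IsSymm)
    (hPx' : IsUnit Px.det) (hPy' : IsUnit Py.det) (hQx : Qx + Qxᵀ = 0) {b : n → ℝ}
    (hQy : Qy + Qyᵀ = -vecMulVec b b) {l' o' : Type*} [Fintype l'] [Fintype o']
    (c : o → ℝ) (c' : o' → ℝ) (K : Matrix m l ℝ) (K' : Matrix m l' ℝ) (a1 a2 : ℝ)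
    (f : m × n → ℝ) (g : l × o → ℝ) (g' : l' × o' → ℝ) :
    2 * (f ⬝ᵥ (Px ⊗ₖ Py) *ᵥ ((a1 • ((Px⁻¹ * Qx) ⊗ₖ (1 : Matrix n n ℝ))
        + a2 • ((1 : Matrix m m ℝ) ⊗ₖ (Py⁻¹ * Qy))) *ᵥ f
      - (-a2 / 2) • ((1 : Matrix m m ℝ) ⊗ₖ Py⁻¹) *ᵥ
        (((1 : Matrix m m ℝ) ⊗ₖ vecMulVec b b) *ᵥ f - (K ⊗ₖ vecMulVec b c) *ᵥ g
          - (K' ⊗ₖ vecMulVec b c') *ᵥ g')))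
      = -(a2 * (f ⬝ᵥ ((Px * K) ⊗ₖ vecMulVec b c) *ᵥ g
          + f ⬝ᵥ ((Px * K') ⊗ₖ vecMulVec b c') *ᵥ g')) := by
  rw [two_mul_energy_rate_sbp hPx hPy hPx' hPy' hQx hQy, kronecker_neg, neg_mulVec,
    dotProduct_neg, mulVec_sub, mulVec_sub, dotProduct_sub, dotProduct_sub,
    dotProduct_kronecker_one_mulVec, dotProduct_kronecker_one_mulVec,
    dotProduct_kronecker_one_mulVec, Matrix.mul_one]
  ring

end SBPBlock

theorem nonconforming_interpolation_adjoint {k m f : Type*} [Fintype k] [Fintype m] [Fintype f]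
    [DecidableEq k] {Px : Matrix k k ℝ} {Pc : Matrix m m ℝ} {Pf : Matrix f f ℝ}
    (hPx : IsUnit Px.det) {Ic2f : Matrix f m ℝ} {If2c : Matrix m f ℝ}
    (hnorm : Pc * If2c = Ic2fᵀ * Pf) (J : Matrix m k ℝ) :
    Px * (Px⁻¹ * Jᵀ * Pc * If2c) = (Ic2f * J)ᵀ * Pf := by
  rw [Matrix.mul_assoc, Matrix.mul_assoc, mul_nonsing_inv_cancel_left _ _ hPx, hnorm,
    transpose_mul, Matrix.mul_assoc]

theorem dotProduct_kronecker_vecMulVec_mulVec_comm {k m n o : Type*} [Fintype k] [Fintype m]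
    [Fintype n] [Fintype o] {P : Matrix m m ℝ} (hP : P.IsSymm) (A : Matrix m k ℝ)
    (a : n → ℝ) (b : o → ℝ) (x : k × n → ℝ) (y : m × o → ℝ) :
    x ⬝ᵥ ((Aᵀ * P) ⊗ₖ vecMulVec a b) *ᵥ y = y ⬝ᵥ ((P * A) ⊗ₖ vecMulVec b a) *ᵥ x := by
  rw [← dotProduct_transpose_mulVec _ x y, ← kroneckerMap_transpose, transpose_mul, hP.eq,
    transpose_vecMulVec]

theorem sbp_fd_junction_advection_nonconforming_stability_general
    (kw lw ku lu kv lv : ℕ) (a1 a2 : ℝ)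
    (Pxw : Matrix (Fin (kw + 1)) (Fin (kw + 1)) ℝ)
    (Pyw : Matrix (Fin (lw + 1)) (Fin (lw + 1)) ℝ)
    (Pxu : Matrix (Fin (ku + 1)) (Fin (ku + 1)) ℝ)
    (Pyu : Matrix (Fin (lu + 1)) (Fin (lu + 1)) ℝ)
    (Pxv : Matrix (Fin (kv + 1)) (Fin (kv + 1)) ℝ)
    (Pyv : Matrix (Fin (lv + 1)) (Fin (lv + 1)) ℝ)
    (hPxw : Pxw.IsDiag) (hPxwP : Pxw.PosDef)
    (hPyw : Pyw.IsDiag) (hPywP : Pyw.PosDef)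
    (hPxu : Pxu.IsDiag) (hPxuP : Pxu.PosDef)
    (hPyu : Pyu.IsDiag) (hPyuP : Pyu.PosDef)
    (hPxv : Pxv.IsDiag) (hPxvP : Pxv.PosDef)
    (hPyv : Pyv.IsDiag) (hPyvP : Pyv.PosDef)
    (Qxw : Matrix (Fin (kw + 1)) (Fin (kw + 1)) ℝ)
    (Qyw : Matrix (Fin (lw + 1)) (Fin (lw + 1)) ℝ)
    (Qxu : Matrix (Fin (ku + 1)) (Fin (ku + 1)) ℝ)
    (Qyu : Matrix (Fin (lu + 1)) (Fin (lu + 1)) ℝ)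
    (Qxv : Matrix (Fin (kv + 1)) (Fin (kv + 1)) ℝ)
    (Qyv : Matrix (Fin (lv + 1)) (Fin (lv + 1)) ℝ)
    (hQxw : Qxw + Qxwᵀ = 0) (hQxu : Qxu + Qxuᵀ = 0) (hQxv : Qxv + Qxvᵀ = 0)
    (hQyw : Qyw + Qywᵀ = -vecMulVec (e0v lw) (e0v lw))
    (hQyu : Qyu + Qyuᵀ = vecMulVec (eNv lu) (eNv lu))
    (hQyv : Qyv + Qyvᵀ = vecMulVec (eNv lv) (eNv lv))
    (Iww : Matrix (Fin (kw + 1)) (Fin (kw + 1)) ℝ)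
    (Iuu : Matrix (Fin (ku + 1)) (Fin (ku + 1)) ℝ)
    (Ivv : Matrix (Fin (kv + 1)) (Fin (kv + 1)) ℝ)
    (hIww : Iww = 1) (hIuu : Iuu = 1) (hIvv : Ivv = 1)
    (mu mv : ℕ)
    (Pcxu : Matrix (Fin (mu + 1)) (Fin (mu + 1)) ℝ)
    (Pcxv : Matrix (Fin (mv + 1)) (Fin (mv + 1)) ℝ)
    (Jwu : Matrix (Fin (mu + 1)) (Fin (kw + 1)) ℝ)
    (Jwv : Matrix (Fin (mv + 1)) (Fin (kw + 1)) ℝ)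
    (Jwu' : Matrix (Fin (kw + 1)) (Fin (mu + 1)) ℝ)
    (Jwv' : Matrix (Fin (kw + 1)) (Fin (mv + 1)) ℝ)
    (hJwu' : Jwu' = Pxw⁻¹ * Jwuᵀ * Pcxu)
    (hJwv' : Jwv' = Pxw⁻¹ * Jwvᵀ * Pcxv)
    (Ic2fu : Matrix (Fin (ku + 1)) (Fin (mu + 1)) ℝ)
    (If2cu : Matrix (Fin (mu + 1)) (Fin (ku + 1)) ℝ)
    (Ic2fv : Matrix (Fin (kv + 1)) (Fin (mv + 1)) ℝ)
    (If2cv : Matrix (Fin (mv + 1)) (Fin (kv + 1)) ℝ)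
    (hnormu : Pcxu * If2cu = Ic2fuᵀ * Pxu)
    (hnormv : Pcxv * If2cv = Ic2fvᵀ * Pxv)
    (Iwu : Matrix (Fin (ku + 1)) (Fin (kw + 1)) ℝ)
    (Iwv : Matrix (Fin (kv + 1)) (Fin (kw + 1)) ℝ)
    (Iwu' : Matrix (Fin (kw + 1)) (Fin (ku + 1)) ℝ)
    (Iwv' : Matrix (Fin (kw + 1)) (Fin (kv + 1)) ℝ)
    (hIwu : Iwu = Ic2fu * Jwu) (hIwv : Iwv = Ic2fv * Jwv)
    (hIwu' : Iwu' = Jwu' * If2cu) (hIwv' : Iwv' = Jwv' * If2cv)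
    (τw τuv : ℝ) (hτw : τw = -a2 / 2) (hτuv : τuv = a2 / 2)
    (w : ℝ → (Fin (kw + 1) × Fin (lw + 1) → ℝ))
    (u : ℝ → (Fin (ku + 1) × Fin (lu + 1) → ℝ))
    (v : ℝ → (Fin (kv + 1) × Fin (lv + 1) → ℝ))
    (hw : ∀ t : ℝ, 0 ≤ t → HasDerivAt w
      ((a1 • ((Pxw⁻¹ * Qxw) ⊗ₖ (1 : Matrix (Fin (lw + 1)) (Fin (lw + 1)) ℝ))
          + a2 • ((1 : Matrix (Fin (kw + 1)) (Fin (kw + 1)) ℝ) ⊗ₖ (Pyw⁻¹ * Qyw))).mulVec (w t)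
        - τw • ((1 : Matrix (Fin (kw + 1)) (Fin (kw + 1)) ℝ) ⊗ₖ Pyw⁻¹).mulVec
            ((Iww ⊗ₖ vecMulVec (e0v lw) (e0v lw)).mulVec (w t)
              - (Iwu' ⊗ₖ vecMulVec (e0v lw) (eNv lu)).mulVec (u t)
              - (Iwv' ⊗ₖ vecMulVec (e0v lw) (eNv lv)).mulVec (v t))) t)
    (hu : ∀ t : ℝ, 0 ≤ t → HasDerivAt u
      ((a1 • ((Pxu⁻¹ * Qxu) ⊗ₖ (1 : Matrix (Fin (lu + 1)) (Fin (lu + 1)) ℝ))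
          + a2 • ((1 : Matrix (Fin (ku + 1)) (Fin (ku + 1)) ℝ) ⊗ₖ (Pyu⁻¹ * Qyu))).mulVec (u t)
        - τuv • ((1 : Matrix (Fin (ku + 1)) (Fin (ku + 1)) ℝ) ⊗ₖ Pyu⁻¹).mulVec
            ((Iuu ⊗ₖ vecMulVec (eNv lu) (eNv lu)).mulVec (u t)
              - (Iwu ⊗ₖ vecMulVec (eNv lu) (e0v lw)).mulVec (w t))) t)
    (hv : ∀ t : ℝ, 0 ≤ t → HasDerivAt v
      ((a1 • ((Pxv⁻¹ * Qxv) ⊗ₖ (1 : Matrix (Fin (lv + 1)) (Fin (lv + 1)) ℝ))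
          + a2 • ((1 : Matrix (Fin (kv + 1)) (Fin (kv + 1)) ℝ) ⊗ₖ (Pyv⁻¹ * Qyv))).mulVec (v t)
        - τuv • ((1 : Matrix (Fin (kv + 1)) (Fin (kv + 1)) ℝ) ⊗ₖ Pyv⁻¹).mulVec
            ((Ivv ⊗ₖ vecMulVec (eNv lv) (eNv lv)).mulVec (v t)
              - (Iwv ⊗ₖ vecMulVec (eNv lv) (e0v lw)).mulVec (w t))) t) :
    ∀ t : ℝ, 0 ≤ t →
      energyR Pxw Pyw (w t) + energyR Pxu Pyu (u t) + energyR Pxv Pyv (v t)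
        = energyR Pxw Pyw (w 0) + energyR Pxu Pyu (u 0) + energyR Pxv Pyv (v 0) := by
  subst hIww hIuu hIvv hJwu' hJwv' hIwu hIwv hIwu' hIwv' hτw hτuv
  have hrate : ∀ t : ℝ, 0 ≤ t → HasDerivAt (fun s =>
      energyR Pxw Pyw (w s) + energyR Pxu Pyu (u s) + energyR Pxv Pyv (v s)) 0 t := by
    intro t ht
    have hW := hasDerivAt_energyR hPxw.isSymm hPyw.isSymm (hw t ht)
    have hU := hasDerivAt_energyR hPxu.isSymm hPyu.isSymm (hu t ht)
    have hV := hasDerivAt_energyR hPxv.isSymm hPyv.isSymm (hv t ht)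
    have hPxw' := hPxwP.det_pos.ne'.isUnit
    rw [two_mul_energy_rate_sbp_bottom_interface hPxw.isSymm hPyw.isSymm hPxw'
        hPywP.det_pos.ne'.isUnit hQxw hQyw,
      nonconforming_interpolation_adjoint hPxw' hnormu,
      nonconforming_interpolation_adjoint hPxw' hnormv,
      dotProduct_kronecker_vecMulVec_mulVec_comm hPxu.isSymm,
      dotProduct_kronecker_vecMulVec_mulVec_comm hPxv.isSymm] at hW
    rw [two_mul_energy_rate_sbp_top_interface hPxu.isSymm hPyu.isSymm hPxuP.det_pos.ne'.isUnit
      hPyuP.det_pos.ne'.isUnit hQxu hQyu] at hU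
    rw [two_mul_energy_rate_sbp_top_interface hPxv.isSymm hPyv.isSymm hPxvP.det_pos.ne'.isUnit
      hPyvP.det_pos.ne'.isUnit hQxv hQyv] at hV
    exact ((hW.add hU).add hV).congr_deriv (by ring)
  intro t ht
  exact constant_of_has_deriv_right_zero
    (fun x hx => (hrate x hx.1).continuousAt.continuousWithinAt)
    (fun x hx => (hrate x hx.1).hasDerivWithinAt) t ⟨ht, le_rfl⟩

/-- (Theorem 4: stability of the SBP-FD junction for the advection equation,
nonconforming grids.) With identity operators `I_w^w, I_u^u, I_v^v`, the nonconforming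
interpolation operators built from coarse interpolation operators and SBP-preserving
grid-transfer operators, and penalty parameters `τ_w = -a₂/2`, `τ_{uv} = a₂/2`, every
solution of the SBP-FD junction semi-discretization of `U_t = a₁ U_x + a₂ U_y`
conserves the discrete energy. -/
theorem sbp_fd_junction_advection_nonconforming_stability
    (kw lw ku lu kv lv : ℕ) (a1 a2 : ℝ)
    (Pxw : Matrix (Fin (kw + 1)) (Fin (kw + 1)) ℝ)
    (Pyw : Matrix (Fin (lw + 1)) (Fin (lw + 1)) ℝ)
    (Pxu : Matrix (Fin (ku + 1)) (Fin (ku + 1)) ℝ)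
    (Pyu : Matrix (Fin (lu + 1)) (Fin (lu + 1)) ℝ)
    (Pxv : Matrix (Fin (kv + 1)) (Fin (kv + 1)) ℝ)
    (Pyv : Matrix (Fin (lv + 1)) (Fin (lv + 1)) ℝ)
    (hPxw : Pxw.IsDiag) (hPxwP : Pxw.PosDef)
    (hPyw : Pyw.IsDiag) (hPywP : Pyw.PosDef)
    (hPxu : Pxu.IsDiag) (hPxuP : Pxu.PosDef)
    (hPyu : Pyu.IsDiag) (hPyuP : Pyu.PosDef)
    (hPxv : Pxv.IsDiag) (hPxvP : Pxv.PosDef)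
    (hPyv : Pyv.IsDiag) (hPyvP : Pyv.PosDef)
    (Qxw : Matrix (Fin (kw + 1)) (Fin (kw + 1)) ℝ)
    (Qyw : Matrix (Fin (lw + 1)) (Fin (lw + 1)) ℝ)
    (Qxu : Matrix (Fin (ku + 1)) (Fin (ku + 1)) ℝ)
    (Qyu : Matrix (Fin (lu + 1)) (Fin (lu + 1)) ℝ)
    (Qxv : Matrix (Fin (kv + 1)) (Fin (kv + 1)) ℝ)
    (Qyv : Matrix (Fin (lv + 1)) (Fin (lv + 1)) ℝ)
    (hQxw : Qxw + Qxwᵀ = 0) (hQxu : Qxu + Qxuᵀ = 0) (hQxv : Qxv + Qxvᵀ = 0)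
    (hQyw : Qyw + Qywᵀ = -vecMulVec (e0v lw) (e0v lw))
    (hQyu : Qyu + Qyuᵀ = vecMulVec (eNv lu) (eNv lu))
    (hQyv : Qyv + Qyvᵀ = vecMulVec (eNv lv) (eNv lv))
    (Iww : Matrix (Fin (kw + 1)) (Fin (kw + 1)) ℝ)
    (Iuu : Matrix (Fin (ku + 1)) (Fin (ku + 1)) ℝ)
    (Ivv : Matrix (Fin (kv + 1)) (Fin (kv + 1)) ℝ)
    (hIww : Iww = 1) (hIuu : Iuu = 1) (hIvv : Ivv = 1)
    (mu mv : ℕ)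
    (Pcxu : Matrix (Fin (mu + 1)) (Fin (mu + 1)) ℝ)
    (Pcxv : Matrix (Fin (mv + 1)) (Fin (mv + 1)) ℝ)
    (hPcxu : Pcxu.IsDiag) (hPcxuP : Pcxu.PosDef)
    (hPcxv : Pcxv.IsDiag) (hPcxvP : Pcxv.PosDef)
    (Jwu : Matrix (Fin (mu + 1)) (Fin (kw + 1)) ℝ)
    (Jwv : Matrix (Fin (mv + 1)) (Fin (kw + 1)) ℝ)
    (Jwu' : Matrix (Fin (kw + 1)) (Fin (mu + 1)) ℝ)
    (Jwv' : Matrix (Fin (kw + 1)) (Fin (mv + 1)) ℝ)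
    (hJwu' : Jwu' = Pxw⁻¹ * Jwuᵀ * Pcxu)
    (hJwv' : Jwv' = Pxw⁻¹ * Jwvᵀ * Pcxv)
    (Ic2fu : Matrix (Fin (ku + 1)) (Fin (mu + 1)) ℝ)
    (If2cu : Matrix (Fin (mu + 1)) (Fin (ku + 1)) ℝ)
    (Ic2fv : Matrix (Fin (kv + 1)) (Fin (mv + 1)) ℝ)
    (If2cv : Matrix (Fin (mv + 1)) (Fin (kv + 1)) ℝ)
    (hnormu : Pcxu * If2cu = Ic2fuᵀ * Pxu)
    (hnormv : Pcxv * If2cv = Ic2fvᵀ * Pxv)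
    (Iwu : Matrix (Fin (ku + 1)) (Fin (kw + 1)) ℝ)
    (Iwv : Matrix (Fin (kv + 1)) (Fin (kw + 1)) ℝ)
    (Iwu' : Matrix (Fin (kw + 1)) (Fin (ku + 1)) ℝ)
    (Iwv' : Matrix (Fin (kw + 1)) (Fin (kv + 1)) ℝ)
    (hIwu : Iwu = Ic2fu * Jwu) (hIwv : Iwv = Ic2fv * Jwv)
    (hIwu' : Iwu' = Jwu' * If2cu) (hIwv' : Iwv' = Jwv' * If2cv)
    (τw τuv : ℝ) (hτw : τw = -a2 / 2) (hτuv : τuv = a2 / 2)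
    (w : ℝ → (Fin (kw + 1) × Fin (lw + 1) → ℝ))
    (u : ℝ → (Fin (ku + 1) × Fin (lu + 1) → ℝ))
    (v : ℝ → (Fin (kv + 1) × Fin (lv + 1) → ℝ))
    (hw : ∀ t : ℝ, 0 ≤ t → HasDerivAt w
      ((a1 • ((Pxw⁻¹ * Qxw) ⊗ₖ (1 : Matrix (Fin (lw + 1)) (Fin (lw + 1)) ℝ))
          + a2 • ((1 : Matrix (Fin (kw + 1)) (Fin (kw + 1)) ℝ) ⊗ₖ (Pyw⁻¹ * Qyw))).mulVec (w t)
        - τw • ((1 : Matrix (Fin (kw + 1)) (Fin (kw + 1)) ℝ) ⊗ₖ Pyw⁻¹).mulVec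
            ((Iww ⊗ₖ vecMulVec (e0v lw) (e0v lw)).mulVec (w t)
              - (Iwu' ⊗ₖ vecMulVec (e0v lw) (eNv lu)).mulVec (u t)
              - (Iwv' ⊗ₖ vecMulVec (e0v lw) (eNv lv)).mulVec (v t))) t)
    (hu : ∀ t : ℝ, 0 ≤ t → HasDerivAt u
      ((a1 • ((Pxu⁻¹ * Qxu) ⊗ₖ (1 : Matrix (Fin (lu + 1)) (Fin (lu + 1)) ℝ))
          + a2 • ((1 : Matrix (Fin (ku + 1)) (Fin (ku + 1)) ℝ) ⊗ₖ (Pyu⁻¹ * Qyu))).mulVec (u t)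
        - τuv • ((1 : Matrix (Fin (ku + 1)) (Fin (ku + 1)) ℝ) ⊗ₖ Pyu⁻¹).mulVec
            ((Iuu ⊗ₖ vecMulVec (eNv lu) (eNv lu)).mulVec (u t)
              - (Iwu ⊗ₖ vecMulVec (eNv lu) (e0v lw)).mulVec (w t))) t)
    (hv : ∀ t : ℝ, 0 ≤ t → HasDerivAt v
      ((a1 • ((Pxv⁻¹ * Qxv) ⊗ₖ (1 : Matrix (Fin (lv + 1)) (Fin (lv + 1)) ℝ))
          + a2 • ((1 : Matrix (Fin (kv + 1)) (Fin (kv + 1)) ℝ) ⊗ₖ (Pyv⁻¹ * Qyv))).mulVec (v t)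
        - τuv • ((1 : Matrix (Fin (kv + 1)) (Fin (kv + 1)) ℝ) ⊗ₖ Pyv⁻¹).mulVec
            ((Ivv ⊗ₖ vecMulVec (eNv lv) (eNv lv)).mulVec (v t)
              - (Iwv ⊗ₖ vecMulVec (eNv lv) (e0v lw)).mulVec (w t))) t) :
    ∀ t : ℝ, 0 ≤ t →
      energyR Pxw Pyw (w t) + energyR Pxu Pyu (u t) + energyR Pxv Pyv (v t)
        = energyR Pxw Pyw (w 0) + energyR Pxu Pyu (u 0) + energyR Pxv Pyv (v 0) :=
  sbp_fd_junction_advection_nonconforming_stability_general kw lw ku lu kv lv a1 a2 Pxw Pyw Pxu Pyu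
    Pxv Pyv hPxw hPxwP hPyw hPywP hPxu hPxuP hPyu hPyuP hPxv hPxvP hPyv hPyvP Qxw Qyw Qxu Qyu Qxv
    Qyv hQxw hQxu hQxv hQyw hQyu hQyv Iww Iuu Ivv hIww hIuu hIvv mu mv Pcxu Pcxv Jwu Jwv Jwu' Jwv'
    hJwu' hJwv' Ic2fu If2cu Ic2fv If2cv hnormu hnormv Iwu Iwv Iwu' Iwv' hIwu hIwv hIwu' hIwv' τw τuv
    hτw hτuv w u v hw hu hv

end
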